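/- arXiv:1606.06478 — 9 statements merged into one kernel-verified Lean document; each statement's English description precedes it below -/
import Mathlib

section
/- Let N be a commutative binoid (a commutative monoid with an absorbing element ∞) and I a finitely generated ideal of N. Then the intersection over all n of the n-fold sums nI equals the intersection over all q of the Frobenius sums [q]I, where nI = {a₁+⋯+aₙ : aᵢ ∈ I} and [q]I is the ideal generated by {qa : a ∈ I}. -/
/-!  Basic theory of (commutative) binoids: a commutative monoid together with
an absorbing element `infty`.  We use a bundled structure `BinoidOn X`. -/

structure BinoidOn (X : Type u) where
  add : X → X → X
  zero : X
  infty : X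
  add_assoc : ∀ a b c : X, add (add a b) c = add a (add b c)
  add_comm : ∀ a b : X, add a b = add b a
  zero_add : ∀ a : X, add zero a = a
  infty_add : ∀ a : X, add infty a = infty

namespace BinoidOn

variable {X : Type u} {Y : Type v} (B : BinoidOn X) (C : BinoidOn Y)

/-- `n`-fold multiple `n • a`. -/
def smul (B : BinoidOn X) : ℕ → X → X
  | 0, _ => B.zero
  | n + 1, a => B.add a (smul B n a)

/-- Sum of a list of elements. -/
def listSum (l : List X) : X := l.foldr B.add B.zero

/-- An ideal of a binoid: a nonempty subset `I` with `I + N ⊆ I`. -/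
def IsIdeal (I : Set X) : Prop := I.Nonempty ∧ ∀ a ∈ I, ∀ x : X, B.add a x ∈ I

/-- A subbinoid: a submonoid containing `infty`. -/
def IsSubbinoid (M : Set X) : Prop :=
  B.zero ∈ M ∧ B.infty ∈ M ∧ ∀ a ∈ M, ∀ b ∈ M, B.add a b ∈ M

/-- The set of units. -/
def unitsSet : Set X := {u | ∃ a, B.add u a = B.zero}

/-- `N₊`, the ideal of non-units. -/
def nplus : Set X := (B.unitsSet)ᶜ

/-- The ideal generated by a set. -/
def genIdeal (S : Set X) : Set X := {x | ∃ a ∈ S, ∃ n, x = B.add a n}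

/-- The `n`-fold sum `nI = {a₁ + ⋯ + aₙ | aᵢ ∈ I}`. -/
def nSum (n : ℕ) (I : Set X) : Set X :=
  {x | ∃ l : List X, l.length = n ∧ (∀ a ∈ l, a ∈ I) ∧ x = B.listSum l}

/-- The Frobenius power `[q]I`: the ideal generated by `{q • a | a ∈ I}`. -/
def frob (q : ℕ) (I : Set X) : Set X := B.genIdeal {x | ∃ a ∈ I, x = B.smul q a}

/-- The radical of an ideal. -/
def radical (I : Set X) : Set X := {a | ∃ n : ℕ, 0 < n ∧ B.smul n a ∈ I}

/-- `N₊`-primary ideal. -/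
def IsPrimary (I : Set X) : Prop := B.radical I = B.nplus

/-- Finitely generated binoid. -/
def FG : Prop :=
  ∃ G : Finset X, ∀ x : X, x = B.infty ∨ ∃ l : List X, (∀ a ∈ l, a ∈ G) ∧ x = B.listSum l

/-- Semipositive: a nonzero binoid with finitely many units. -/
def Semipositive : Prop := B.zero ≠ B.infty ∧ B.unitsSet.Finite

/-- Prime ideal. -/
def IsPrime (P : Set X) : Prop :=
  B.IsIdeal P ∧ P ≠ Set.univ ∧ ∀ a b : X, B.add a b ∈ P → a ∈ P ∨ b ∈ P

/-- The (combinatorial) dimension of the binoid is `d`: there is a strictly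
increasing chain of prime ideals of length `d`, and no longer one. -/
def HasDim (d : ℕ) : Prop :=
  (∃ c : Fin (d + 1) → Set X, StrictMono c ∧ ∀ i, B.IsPrime (c i)) ∧
    ∀ (k : ℕ) (c : Fin (k + 1) → Set X), StrictMono c → (∀ i, B.IsPrime (c i)) → k ≤ d

end BinoidOn

/-- The setoid collapsing a subset `A` to a single point (Rees congruence). -/
def collapseSetoid {X : Type u} (A : Set X) : Setoid X where
  r x y := x = y ∨ (x ∈ A ∧ y ∈ A)
  iseqv := ⟨fun _ => Or.inl rfl,
    fun h => h.elim (fun e => Or.inl e.symm) (fun h => Or.inr ⟨h.2, h.1⟩),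
    fun h1 h2 => by
      rcases h1 with rfl | h1
      · exact h2
      · rcases h2 with rfl | h2
        · exact Or.inr h1
        · exact Or.inr ⟨h1.1, h2.2⟩⟩

namespace BinoidOn

variable {X : Type u} {Y : Type v} (B : BinoidOn X) (C : BinoidOn Y)

/-- The underlying set of the Rees quotient `N/I` (we collapse the ideal
generated by `I`; for an ideal `I` this is `I` itself). -/
abbrev ReesQuot (I : Set X) : Type u := Quotient (collapseSetoid (B.genIdeal I))

lemma genIdeal_closed {I : Set X} {a : X} (ha : a ∈ B.genIdeal I) (x : X) :
    B.add a x ∈ B.genIdeal I := by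
  obtain ⟨b, hb, n, rfl⟩ := ha
  exact ⟨b, hb, B.add n x, (B.add_assoc b n x)⟩

/-- The Rees quotient binoid `N/I`. -/
def quotB (I : Set X) : BinoidOn (B.ReesQuot I) where
  add := Quotient.map₂ B.add (by
    rintro a a' (rfl | ⟨ha, ha'⟩) b b' (rfl | ⟨hb, hb'⟩)
    · exact Or.inl rfl
    · exact Or.inr ⟨by rw [B.add_comm]; exact B.genIdeal_closed hb _,
        by rw [B.add_comm]; exact B.genIdeal_closed hb' _⟩
    · exact Or.inr ⟨B.genIdeal_closed ha _, B.genIdeal_closed ha' _⟩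
    · exact Or.inr ⟨B.genIdeal_closed ha _, B.genIdeal_closed ha' _⟩)
  zero := Quotient.mk _ B.zero
  infty := Quotient.mk _ B.infty
  add_assoc := by
    rintro ⟨a⟩ ⟨b⟩ ⟨c⟩
    exact congrArg (Quotient.mk _) (B.add_assoc a b c)
  add_comm := by
    rintro ⟨a⟩ ⟨b⟩
    exact congrArg (Quotient.mk _) (B.add_comm a b)
  zero_add := by
    rintro ⟨a⟩
    exact congrArg (Quotient.mk _) (B.zero_add a)
  infty_add := by
    rintro ⟨a⟩
    exact congrArg (Quotient.mk _) (B.infty_add a)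

/-- The underlying set of `N/[q]N₊`. -/
abbrev hkQuot (q : ℕ) : Type u := Quotient (collapseSetoid (B.frob q B.nplus))

/-- The Hilbert–Kunz function `HKF(N,q) = #(N/[q]N₊)`, where `#S = |S| - 1`. -/
noncomputable def hkf (q : ℕ) : ℕ := Nat.card (B.hkQuot q) - 1

/-- Pairs with an `infty` coordinate. -/
def inftyPairs : Set (X × Y) := {p | p.1 = B.infty ∨ p.2 = C.infty}

/-- Carrier of the smash product `M ∧ N`. -/
abbrev SmashCarrier : Type _ := Quotient (collapseSetoid (B.inftyPairs C))

lemma inftyPairs_add_left {p q : X × Y} (hp : p ∈ B.inftyPairs C) :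
    (B.add p.1 q.1, C.add p.2 q.2) ∈ B.inftyPairs C := by
  rcases hp with h | h
  · exact Or.inl (by rw [h, B.infty_add])
  · exact Or.inr (by rw [h, C.infty_add])

lemma inftyPairs_add_right {p q : X × Y} (hq : q ∈ B.inftyPairs C) :
    (B.add p.1 q.1, C.add p.2 q.2) ∈ B.inftyPairs C := by
  rcases hq with h | h
  · exact Or.inl (by rw [h, B.add_comm, B.infty_add])
  · exact Or.inr (by rw [h, C.add_comm, C.infty_add])

/-- The smash product binoid `M ∧ N`. -/
def smash : BinoidOn (B.SmashCarrier C) where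
  add := Quotient.map₂ (fun p q => (B.add p.1 q.1, C.add p.2 q.2)) (by
    rintro p p' (rfl | ⟨hp, hp'⟩) q q' (rfl | ⟨hq, hq'⟩)
    · exact Or.inl rfl
    · exact Or.inr ⟨B.inftyPairs_add_right C hq, B.inftyPairs_add_right C hq'⟩
    · exact Or.inr ⟨B.inftyPairs_add_left C hp, B.inftyPairs_add_left C hp'⟩
    · exact Or.inr ⟨B.inftyPairs_add_left C hp, B.inftyPairs_add_left C hp'⟩)
  zero := Quotient.mk _ (B.zero, C.zero)
  infty := Quotient.mk _ (B.infty, C.infty)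
  add_assoc := by
    rintro ⟨a⟩ ⟨b⟩ ⟨c⟩
    exact congrArg (Quotient.mk _)
      (Prod.ext (B.add_assoc _ _ _) (C.add_assoc _ _ _))
  add_comm := by
    rintro ⟨a⟩ ⟨b⟩
    exact congrArg (Quotient.mk _)
      (Prod.ext (B.add_comm _ _) (C.add_comm _ _))
  zero_add := by
    rintro ⟨a⟩
    exact congrArg (Quotient.mk _)
      (Prod.ext (B.zero_add _) (C.zero_add _))
  infty_add := by
    rintro ⟨a⟩
    exact congrArg (Quotient.mk _)
      (Prod.ext (B.infty_add _) (C.infty_add _))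

end BinoidOn

/-- An `N`-set: a pointed set with an operation of the binoid. -/
structure NSetOn {X : Type u} (B : BinoidOn X) (S : Type w) where
  pt : S
  act : X → S → S
  act_zero : ∀ s, act B.zero s = s
  act_infty : ∀ s, act B.infty s = pt
  act_pt : ∀ n, act n pt = pt
  act_add : ∀ n m s, act (B.add n m) s = act n (act m s)

section NSet

variable {X : Type u} {S : Type w} {B : BinoidOn X}

/-- One step of the connectedness relation on `S ∖ {p}`. -/
def NStep (σ : NSetOn B S) (s t : S) : Prop :=
  s ≠ σ.pt ∧ t ≠ σ.pt ∧ ∃ n, n ≠ B.infty ∧ (σ.act n s = t ∨ σ.act n t = s)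

/-- The connectedness (equivalence) relation `∼_N` on `S ∖ {p}`. -/
def NConn (σ : NSetOn B S) : S → S → Prop := Relation.ReflTransGen (NStep σ)

/-- `N`-subsets of an `N`-set. -/
def IsNSubset (σ : NSetOn B S) (T : Set S) : Prop :=
  σ.pt ∈ T ∧ ∀ n : X, ∀ s ∈ T, σ.act n s ∈ T

/-- `T` is a pointed union of two nontrivial `N`-subsets. -/
def IsReducibleSet (σ : NSetOn B S) (T : Set S) : Prop :=
  ∃ A A' : Set S, IsNSubset σ A ∧ IsNSubset σ A' ∧
    A ≠ {σ.pt} ∧ A' ≠ {σ.pt} ∧ A ∪ A' = T ∧ A ∩ A' = {σ.pt}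

/-- An irreducible `N`-subset. -/
def IsIrreducibleSet (σ : NSetOn B S) (T : Set S) : Prop :=
  IsNSubset σ T ∧ T ≠ {σ.pt} ∧ ¬ IsReducibleSet σ T

end NSet

/-- The trivial binoid `{0, ∞}`, realized on `Bool` (`false = 0`, `true = ∞`). -/
def trivB : BinoidOn Bool where
  add := or
  zero := false
  infty := true
  add_assoc := by decide
  add_comm := by decide
  zero_add := by decide
  infty_add := by decide

/-- The binoid `M^∞` obtained from a commutative monoid by adjoining `∞ = ⊤`. -/
def withTopBinoid (M : Type u) [AddCommMonoid M] : BinoidOn (WithTop M) where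
  add := (· + ·)
  zero := 0
  infty := ⊤
  add_assoc := add_assoc
  add_comm := add_comm
  zero_add := zero_add
  infty_add := fun a => WithTop.top_add a


namespace BinoidOn

variable {X : Type} (B : BinoidOn X)

lemma add_left_comm' (a b c : X) :
    B.add a (B.add b c) = B.add b (B.add a c) := by
  rw [← B.add_assoc, B.add_comm a b, B.add_assoc]

lemma listSum_perm {l l' : List X} (h : l.Perm l') :
    B.listSum l = B.listSum l' := by
  induction h with
  | nil => rfl
  | cons a _ ih => exact congrArg (B.add a) ih
  | swap a b l => exact B.add_left_comm' b a (B.listSum l)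
  | trans _ _ ih1 ih2 => exact ih1.trans ih2

lemma listSum_replicate (q : ℕ) (a : X) :
    B.listSum (List.replicate q a) = B.smul q a := by
  induction q with
  | zero => rfl
  | succ n ih => exact congrArg (B.add a) ih

lemma nSum_closed {I : Set X} (hI : B.IsIdeal I) {n : ℕ} (hn : 1 ≤ n)
    {x : X} (hx : x ∈ B.nSum n I) (y : X) : B.add x y ∈ B.nSum n I := by
  obtain ⟨l, hl, hmem, rfl⟩ := hx
  cases l with
  | nil => simp at hl; omega
  | cons a t =>
    refine ⟨B.add a y :: t, by simpa using hl, ?_, ?_⟩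
    · intro b hb
      rcases List.mem_cons.mp hb with hb | hb
      · exact hb ▸ hI.2 a (hmem a (by simp)) y
      · exact hmem b (by simp [hb])
    · show B.add (B.add a (B.listSum t)) y = B.add (B.add a y) (B.listSum t)
      rw [B.add_assoc, B.add_comm (B.listSum t) y, ← B.add_assoc]

lemma extract_gens {G : Finset X} {l : List X}
    (h : ∀ a ∈ l, ∃ g ∈ (G : Set X), ∃ x, a = B.add g x) :
    ∃ lg : List X, ∃ y : X, lg.length = l.length ∧ (∀ g ∈ lg, g ∈ G) ∧
      B.listSum l = B.add (B.listSum lg) y := by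
  induction l with
  | nil => exact ⟨[], B.zero, rfl, by simp, (B.zero_add B.zero).symm⟩
  | cons a t ih =>
    obtain ⟨lg, y, hlen, hmem, hsum⟩ := ih (fun b hb => h b (by simp [hb]))
    obtain ⟨g, hg, x, hax⟩ := h a (by simp)
    subst hax
    refine ⟨g :: lg, B.add x y, by simp [hlen], ?_, ?_⟩
    · intro b hb
      rcases List.mem_cons.mp hb with hb | hb
      · exact hb ▸ hg
      · exact hmem b hb
    · show B.add (B.add g x) (B.listSum t) = B.add (B.add g (B.listSum lg)) (B.add x y)
      rw [hsum, B.add_assoc, B.add_assoc]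
      exact congrArg (B.add g) (B.add_left_comm' x (B.listSum lg) y)

lemma count_extract [DecidableEq X] {g : X} : ∀ (q : ℕ) (l : List X), q ≤ l.count g →
    ∃ y, B.listSum l = B.add (B.smul q g) y := by
  intro q
  induction q with
  | zero => exact fun l _ => ⟨B.listSum l, (B.zero_add _).symm⟩
  | succ n ih =>
    intro l hq
    have hmem : g ∈ l := by
      by_contra hg
      simp [List.count_eq_zero_of_not_mem hg] at hq
    have hperm := List.perm_cons_erase hmem
    have hc : n ≤ (l.erase g).count g := by
      rw [List.count_erase_self]; omega
    obtain ⟨y, hy⟩ := ih (l.erase g) hc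
    refine ⟨y, ?_⟩
    rw [B.listSum_perm hperm]
    show B.add g (B.listSum (l.erase g)) = B.add (B.add g (B.smul n g)) y
    rw [hy, B.add_assoc]

lemma pigeonhole [DecidableEq X] {G : Finset X} {lg : List X} {q : ℕ} (hq : 1 ≤ q)
    (hmem : ∀ g ∈ lg, g ∈ G) (hlen : (q - 1) * G.card + 1 ≤ lg.length) :
    ∃ g, q ≤ lg.count g := by
  by_contra h
  push_neg at h
  have h1 : lg.length = ∑ a ∈ lg.toFinset, lg.count a := by
    have := Multiset.toFinset_sum_count_eq (↑lg : Multiset X)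
    simpa using this.symm
  have h2 : ∑ a ∈ lg.toFinset, lg.count a ≤ ∑ _a ∈ lg.toFinset, (q - 1) :=
    Finset.sum_le_sum (fun a _ => by have := h a; omega)
  have h3 : lg.toFinset.card ≤ G.card :=
    Finset.card_le_card (fun a ha => hmem a (List.mem_toFinset.mp ha))
  rw [Finset.sum_const, smul_eq_mul] at h2
  have h4 : lg.toFinset.card * (q - 1) ≤ G.card * (q - 1) := Nat.mul_le_mul_right _ h3
  have h5 : (q - 1) * G.card = G.card * (q - 1) := Nat.mul_comm _ _
  omega

end BinoidOn

/-- For a commutative binoid `N` and a finitely generated ideal `I`,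
`⋂_{n ≥ 1} nI = ⋂_{q ≥ 1} [q]I`. -/
theorem stmt0 {X : Type} (B : BinoidOn X) (I : Set X) (hI : B.IsIdeal I)
    (hfg : ∃ G : Finset X, I = B.genIdeal ↑G) :
    (⋂ n ∈ Set.Ici 1, B.nSum n I) = ⋂ q ∈ Set.Ici 1, B.frob q I := by
  classical
  obtain ⟨G, hG⟩ := hfg
  ext x
  simp only [Set.mem_iInter, Set.mem_Ici]
  constructor
  · intro h q hq
    obtain ⟨l, hlen, hmemI, rfl⟩ := h ((q - 1) * G.card + 1) (by omega)
    obtain ⟨lg, y, hlglen, hlgmem, hsum⟩ := B.extract_gens (G := G) (l := l)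
      (fun a ha => by rw [hG] at hmemI; exact hmemI a ha)
    obtain ⟨g, hgcount⟩ := BinoidOn.pigeonhole (X := X) hq hlgmem (by omega)
    obtain ⟨z, hz⟩ := B.count_extract q lg hgcount
    have hgI : g ∈ I := by
      rw [hG]
      refine ⟨g, hlgmem g ?_, B.zero, by rw [B.add_comm, B.zero_add]⟩
      have : 1 ≤ lg.count g := le_trans hq hgcount
      exact List.count_pos_iff.mp this
    refine ⟨B.smul q g, ⟨g, hgI, rfl⟩, B.add z y, ?_⟩
    rw [hsum, hz, B.add_assoc]
  · intro h n hn
    obtain ⟨b, ⟨a, haI, rfl⟩, m, rfl⟩ := h n hn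
    refine B.nSum_closed hI hn ?_ m
    exact ⟨List.replicate n a, by simp, by simp +contextual [haI],
      (B.listSum_replicate n a).symm⟩
end

section
/- Let M ⊆ N be commutative binoids with N cancellative. Then N is finite over M (i.e., finitely generated as an M-set) if and only if N is pure integral over M (for every n ∈ N there exists k ∈ ℕ₊ with kn ∈ M) and N is finitely generated as an M-binoid. -/
/-! A binoid is a commutative monoid with an absorbing element `∞`. If `N = M + T` with `T`
finite, the remainders of `x, 2 • x, 3 • x, …` can be chosen each from the previous one, so two of
them coincide; this gives `(a + r) • x = ν + a • x` with `ν ∈ M` and `r > 0`, and cancelling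
`a • x ≠ ∞` leaves `r • x ∈ M`. Conversely, if every generator `t` has `kₜ • t ∈ M`, dividing the
coefficients of `∑ cₜ • t` by `kₜ` shows that the finitely many sums `∑ rₜ • t` with `rₜ < kₜ`
generate `N` as an `M`-set. -/

namespace BinoidOn

variable {X : Type u}

/-- With this structure `B.smul` is `nsmul` and `B.listSum` is `List.sum` definitionally. -/
abbrev toAddCommMonoid (B : BinoidOn X) : AddCommMonoid X where
  add := B.add
  zero := B.zero
  add_assoc := B.add_assoc
  zero_add := B.zero_add
  add_zero a := (B.add_comm a B.zero).trans (B.zero_add a)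
  add_comm := B.add_comm
  nsmul := B.smul
  nsmul_zero _ := rfl
  nsmul_succ n a := B.add_comm a (B.smul n a)

end BinoidOn

section FiniteOver

variable {N : Type*} [AddCommMonoid N] (M : AddSubmonoid N)

theorem exists_add_nsmul_eq_of_finite_over {S : Set N} (hS : S.Finite)
    (hMS : ∀ x, ∃ m ∈ M, ∃ s ∈ S, x = m + s) (x : N) :
    ∃ a r : ℕ, 0 < r ∧ ∃ ν ∈ M, (a + r) • x = ν + a • x := by
  choose m hm s hs hx using hMS
  -- `u p` is the remainder of `p • x`, computed one summand `x` at a time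
  let u : ℕ → N := fun p => Nat.rec 0 (fun _ v => s (v + x)) p
  have shift : ∀ q p, ∃ ν ∈ M, q • x + u p = ν + u (p + q) := by
    intro q
    induction q with
    | zero => exact fun p => ⟨0, M.zero_mem, by simp⟩
    | succ q ih =>
      intro p
      obtain ⟨ν, hν, h⟩ := ih p
      refine ⟨ν + m (u (p + q) + x), M.add_mem hν (hm _), ?_⟩
      calc (q + 1) • x + u p = (q • x + u p) + x := by rw [succ_nsmul]; abel
        _ = ν + (u (p + q) + x) := by rw [h, add_assoc]
        _ = ν + (m (u (p + q) + x) + s (u (p + q) + x)) := by rw [← hx]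
        _ = ν + m (u (p + q) + x) + u (p + q + 1) := (add_assoc _ _ _).symm
  obtain ⟨a, b, hab, huab⟩ := (hS.insert 0).exists_lt_map_eq_of_forall_mem (f := u)
    (fun p => by cases p <;> simp [u, hs])
  obtain ⟨μ, hμ, hμa⟩ := shift a 0
  obtain ⟨ν, hν, hνa⟩ := shift (b - a) a
  refine ⟨a, b - a, Nat.sub_pos_of_lt hab, ν, hν, ?_⟩
  rw [Nat.add_sub_of_le hab.le, ← huab] at hνa
  rw [show u 0 = 0 from rfl, add_zero, zero_add] at hμa
  rw [add_nsmul, hμa, add_comm _ ((b - a) • x), add_left_comm, hνa, add_left_comm]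

theorem exists_finite_remainders_of_forall_nsmul_mem (T : Finset N)
    (hint : ∀ t ∈ T, ∃ k, 0 < k ∧ k • t ∈ M) :
    ∃ S : Set N, S.Finite ∧
      ∀ y ∈ AddSubmonoid.closure (T : Set N), ∃ m ∈ M, ∃ s ∈ S, y = m + s := by
  choose! k hk hkM using hint
  refine ⟨Set.range fun r : (t : T) → Fin (k t) => ∑ t, (r t : ℕ) • (t : N),
    Set.finite_range _, fun y hy => ?_⟩
  obtain ⟨c, rfl⟩ := AddSubmonoid.mem_closure_finset'.1 hy
  refine ⟨∑ t : T, (c t / k t) • (k t • (t : N)),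
    AddSubmonoid.sum_mem _ fun t _ => AddSubmonoid.nsmul_mem _ (hkM t t.2) _,
    _, ⟨fun t => ⟨c t % k t, Nat.mod_lt _ (hk t t.2)⟩, rfl⟩, ?_⟩
  rw [← Finset.sum_add_distrib]
  refine Finset.sum_congr rfl fun t _ => ?_
  rw [← mul_nsmul', ← add_nsmul]
  exact congrArg (· • (t : N)) (Nat.div_add_mod' _ _).symm

end FiniteOver

section Absorbing

variable {N : Type*} [AddCommMonoid N] {z : N} (hz : ∀ a, z + a = z)
  (hcanc : ∀ a b c : N, c ≠ z → a + c = b + c → a = b)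
include hz hcanc

theorem nsmul_ne_of_cancel {x : N} (hx : x ≠ z) (n : ℕ) : n • x ≠ z := by
  induction n with
  | zero => rw [zero_nsmul]; exact fun h => hx (by rw [← zero_add x, h, hz])
  | succ n ih => exact fun h => ih (hcanc _ z x hx (by rw [← succ_nsmul, h, hz]))

theorem exists_nsmul_mem_of_finite_over (M : AddSubmonoid N) (hzM : z ∈ M) {S : Set N}
    (hS : S.Finite) (hMS : ∀ x, ∃ m ∈ M, ∃ s ∈ S, x = m + s) (x : N) :
    ∃ k, 0 < k ∧ k • x ∈ M := by
  by_cases hx : x = z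
  · exact ⟨1, one_pos, by rwa [one_nsmul, hx]⟩
  obtain ⟨a, r, hr, ν, hν, h⟩ := exists_add_nsmul_eq_of_finite_over M hS hMS x
  rw [add_nsmul, add_comm] at h
  exact ⟨r, hr, hcanc _ _ _ (nsmul_ne_of_cancel hz hcanc hx a) h ▸ hν⟩

theorem finite_over_iff_integral_and_fg (M : AddSubmonoid N) (hzM : z ∈ M) :
    (∃ T : Finset N, ∀ x, ∃ m ∈ M, ∃ t ∈ T, x = m + t) ↔
      ((∀ x : N, ∃ k, 0 < k ∧ k • x ∈ M) ∧
        ∃ T : Finset N, ∀ x, ∃ m ∈ M, ∃ l : List N, (∀ a ∈ l, a ∈ T) ∧ x = m + l.sum) := by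
  constructor
  · rintro ⟨T, hT⟩
    refine ⟨exists_nsmul_mem_of_finite_over hz hcanc M hzM T.finite_toSet hT, T, fun x => ?_⟩
    obtain ⟨m, hm, t, ht, rfl⟩ := hT x
    exact ⟨m, hm, [t], by simpa using ht, by rw [List.sum_singleton]⟩
  · rintro ⟨hint, T, hT⟩
    obtain ⟨S, hS, hTS⟩ := exists_finite_remainders_of_forall_nsmul_mem M T fun t _ => hint t
    refine ⟨hS.toFinset, fun x => ?_⟩
    obtain ⟨m, hm, l, hl, rfl⟩ := hT x
    obtain ⟨m', hm', s, hs, hls⟩ := hTS l.sum <|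
      AddSubmonoid.list_sum_mem _ fun a ha => AddSubmonoid.subset_closure (hl a ha)
    exact ⟨m + m', M.add_mem hm hm', s, hS.mem_toFinset.2 hs, by rw [hls, add_assoc]⟩

end Absorbing

/-- Let `M ⊆ N` be commutative binoids with `N` cancellative.
Then `N` is finite over `M` (finitely generated as an `M`-set) iff `N` is pure
integral over `M` and `N` is a finitely generated `M`-binoid. -/
theorem stmt3 {X : Type} (B : BinoidOn X) (M : Set X) (hM : B.IsSubbinoid M)
    (hcanc : ∀ a b c : X, c ≠ B.infty → B.add a c = B.add b c → a = b) :
    (∃ T : Finset X, ∀ x : X, ∃ m ∈ M, ∃ t ∈ T, x = B.add m t) ↔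
      ((∀ x : X, ∃ k : ℕ, 0 < k ∧ B.smul k x ∈ M) ∧
        ∃ T : Finset X, ∀ x : X, ∃ m ∈ M, ∃ l : List X,
          (∀ a ∈ l, a ∈ T) ∧ x = B.add m (B.listSum l)) := by
  let := B.toAddCommMonoid
  exact finite_over_iff_integral_and_fg B.infty_add hcanc
    { carrier := M, add_mem' := fun ha hb => hM.2.2 _ ha _ hb, zero_mem' := hM.1 } hM.2.1
end

section
/- Let N be a binoid with a positive ℕ-grading. Then N is separated, i.e. the intersection over all n of nN₊ equals {∞}. -/
/-!
A positive grading bounds the number of non-unit summands of any element `x ≠ ∞`: each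
summand has degree at least one, so `x` is a sum of at most `deg x` non-units. Hence
`x ∉ (deg x + 1) N₊`, while `∞ = ∞ + ⋯ + ∞` lies in every `nN₊`.
-/

namespace BinoidOn

variable {X : Type u} (B : BinoidOn X)

theorem infty_mem_nplus (hnz : B.zero ≠ B.infty) : B.infty ∈ B.nplus := by
  rintro ⟨a, ha⟩
  exact hnz (ha ▸ B.infty_add a)

theorem add_infty (a : X) : B.add a B.infty = B.infty := by
  rw [B.add_comm, B.infty_add]

theorem left_ne_infty_of_add_ne_infty {a b : X} (h : B.add a b ≠ B.infty) : a ≠ B.infty := by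
  rintro rfl
  exact h (B.infty_add b)

theorem right_ne_infty_of_add_ne_infty {a b : X} (h : B.add a b ≠ B.infty) : b ≠ B.infty := by
  rintro rfl
  exact h (B.add_infty a)

theorem listSum_replicate_infty {n : ℕ} (hn : 0 < n) :
    B.listSum (List.replicate n B.infty) = B.infty := by
  obtain ⟨m, rfl⟩ := Nat.exists_eq_add_of_lt hn
  exact B.infty_add _

theorem infty_mem_nSum {n : ℕ} (hn : 0 < n) {I : Set X} (hI : B.infty ∈ I) :
    B.infty ∈ B.nSum n I :=
  ⟨List.replicate n B.infty, List.length_replicate,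
    fun _ ha => List.eq_of_mem_replicate ha ▸ hI, (B.listSum_replicate_infty hn).symm⟩

variable {B} {deg : X → ℕ}

theorem length_le_deg_listSum
    (hdeg : ∀ f g : X, B.add f g ≠ B.infty → deg (B.add f g) = deg f + deg g)
    {I : Set X} (hpos : ∀ f ∈ I, f ≠ B.infty → 0 < deg f)
    {l : List X} (hl : ∀ a ∈ l, a ∈ I) (hne : B.listSum l ≠ B.infty) :
    l.length ≤ deg (B.listSum l) := by
  induction l with
  | nil => exact Nat.zero_le _
  | cons a l ih =>
    change B.add a (B.listSum l) ≠ B.infty at hne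
    have ha : 0 < deg a := hpos a (hl a List.mem_cons_self) (B.left_ne_infty_of_add_ne_infty hne)
    have hl' : l.length ≤ deg (B.listSum l) :=
      ih (fun b hb => hl b (List.mem_cons_of_mem a hb)) (B.right_ne_infty_of_add_ne_infty hne)
    change l.length + 1 ≤ deg (B.add a (B.listSum l))
    rw [hdeg a _ hne]
    omega

theorem eq_infty_of_mem_nSum_of_deg_lt
    (hdeg : ∀ f g : X, B.add f g ≠ B.infty → deg (B.add f g) = deg f + deg g)
    {I : Set X} (hpos : ∀ f ∈ I, f ≠ B.infty → 0 < deg f)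
    {n : ℕ} {x : X} (hx : x ∈ B.nSum n I) (hn : deg x < n) : x = B.infty := by
  obtain ⟨l, rfl, hl, rfl⟩ := hx
  by_contra hne
  exact absurd (length_le_deg_listSum hdeg hpos hl hne) (Nat.not_le.mpr hn)

end BinoidOn

/-- A (nonzero) binoid with a positive `ℕ`-grading is separated:
`⋂_{n ≥ 1} nN₊ = {∞}`. -/
theorem stmt4 {X : Type} (B : BinoidOn X) (hnz : B.zero ≠ B.infty)
    (deg : X → ℕ)
    (hdeg : ∀ f g : X, B.add f g ≠ B.infty → deg (B.add f g) = deg f + deg g)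
    (hpos : ∀ f : X, f ≠ B.infty → f ∈ B.nplus → 0 < deg f) :
    (⋂ n ∈ Set.Ici 1, B.nSum n B.nplus) = {B.infty} := by
  ext x
  simp only [Set.mem_iInter, Set.mem_Ici, Set.mem_singleton_iff]
  constructor
  · intro hx
    exact BinoidOn.eq_infty_of_mem_nSum_of_deg_lt hdeg (fun f hf hne => hpos f hne hf)
      (hx (deg x + 1) (Nat.le_add_left 1 _)) (Nat.lt_succ_self _)
  · rintro rfl n hn
    exact B.infty_mem_nSum hn (B.infty_mem_nplus hnz)
end

section
/- Let N be a binoid and (S,p) an N-set which is finitely generated. Then S admits a finite partition into irreducible N-subsets, and the number of irreducible components is at most the number of generators of S. -/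
/-!
The components are the sets `{p} ∪ C` for the classes `C` of `∼`. Such a set is closed under
the action because `n + s` is either `p` or equivalent to `s`. It is irreducible because a chain
joining the two halves of a pointed union `A ∪ A'` would have a step `n + s = t` with `s ∈ A`,
`t ∈ A'`, and then `t ∈ A ∩ A' = {p}`. Every `s = n + g ≠ p` is equivalent to its generator `g`,
so each class contains a generator.
-/

section Connectedness

variable {X S : Type*} {B : BinoidOn X} {σ : NSetOn B S}

theorem NStep.symm {s t : S} (h : NStep σ s t) : NStep σ t s :=
  let ⟨hs, ht, n, hn, hst⟩ := h
  ⟨ht, hs, n, hn, hst.symm⟩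

theorem NConn.symm {s t : S} (h : NConn σ s t) : NConn σ t s := by
  induction h with
  | refl => exact Relation.ReflTransGen.refl
  | tail _ hst ih => exact Relation.ReflTransGen.head hst.symm ih

theorem NConn.eq_pt {s : S} (h : NConn σ s σ.pt) : s = σ.pt := by
  cases h.symm.cases_head with
  | inl h => exact h.symm
  | inr h => obtain ⟨_, hstep, _⟩ := h; exact absurd rfl hstep.1

theorem NConn.act_of_ne_pt {n : X} {s : S} (hs : s ≠ σ.pt) (hns : σ.act n s ≠ σ.pt) :
    NConn σ (σ.act n s) s := by
  have hn : n ≠ B.infty := fun h => hns (h ▸ σ.act_infty s)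
  exact Relation.ReflTransGen.single ⟨hns, hs, n, hn, Or.inr rfl⟩

theorem IsNSubset.not_nStep_of_inter_eq {A A' : Set S} (hA : IsNSubset σ A)
    (hA' : IsNSubset σ A') (hAA' : A ∩ A' = {σ.pt}) {s t : S} (hs : s ∈ A) (ht : t ∈ A') :
    ¬ NStep σ s t := by
  rintro ⟨hs₀, ht₀, n, -, rfl | rfl⟩
  · exact ht₀ (hAA' ▸ ⟨hA.2 n s hs, ht⟩ : σ.act n s ∈ ({σ.pt} : Set S))
  · exact hs₀ (hAA' ▸ ⟨hs, hA'.2 n t ht⟩ : σ.act n t ∈ ({σ.pt} : Set S))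

theorem IsNSubset.mem_of_nConn {A A' : Set S} (hA : IsNSubset σ A) (hA' : IsNSubset σ A')
    (hAA' : A ∩ A' = {σ.pt}) {s t : S} (hcover : ∀ u, NConn σ s u → u ∈ A ∪ A')
    (hs : s ∈ A) (hst : NConn σ s t) : t ∈ A := by
  induction hst with
  | refl => exact hs
  | @tail u t hsu hut ih =>
    rcases hcover t (hsu.tail hut) with ht | ht
    · exact ht
    · exact absurd hut (hA.not_nStep_of_inter_eq hA' hAA' ih ht)

theorem IsNSubset.exists_mem_ne_pt {A : Set S} (hA : IsNSubset σ A) (hne : A ≠ {σ.pt}) :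
    ∃ a ∈ A, a ≠ σ.pt := by
  by_contra! h
  exact hne (Set.eq_singleton_iff_unique_mem.mpr ⟨hA.1, h⟩)

end Connectedness

namespace NSetOn

variable {X S : Type*} {B : BinoidOn X} (σ : NSetOn B S)

/-- The relation `∼` on `S ∖ {p}`, with `{p}` as an extra class. -/
def connSetoid : Setoid S :=
  ⟨NConn σ, ⟨fun _ => Relation.ReflTransGen.refl, NConn.symm, Relation.ReflTransGen.trans⟩⟩

def component (q : Quotient σ.connSetoid) : Set S :=
  {s | s = σ.pt ∨ Quotient.mk _ s = q}

variable {σ}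

theorem mem_component_mk (s : S) : s ∈ σ.component (Quotient.mk _ s) :=
  Or.inr rfl

theorem isNSubset_component (q : Quotient σ.connSetoid) : IsNSubset σ (σ.component q) := by
  refine ⟨Or.inl rfl, ?_⟩
  rintro n s (rfl | rfl)
  · exact Or.inl (σ.act_pt n)
  · by_cases hs : s = σ.pt
    · exact Or.inl (hs ▸ σ.act_pt n)
    by_cases hns : σ.act n s = σ.pt
    · exact Or.inl hns
    · exact Or.inr (Quotient.sound (NConn.act_of_ne_pt hs hns))

theorem component_inter_component {q q' : Quotient σ.connSetoid} (hqq' : q ≠ q') :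
    σ.component q ∩ σ.component q' = {σ.pt} := by
  ext s
  constructor
  · rintro ⟨rfl | rfl, h | h⟩
    exacts [rfl, rfl, h, absurd h hqq']
  · rintro rfl
    exact ⟨Or.inl rfl, Or.inl rfl⟩

theorem not_isReducibleSet_component (q : Quotient σ.connSetoid) :
    ¬ IsReducibleSet σ (σ.component q) := by
  rintro ⟨A, A', hA, hA', hAne, hA'ne, hunion, hinter⟩
  obtain ⟨a, ha, ha₀⟩ := hA.exists_mem_ne_pt hAne
  obtain ⟨a', ha', ha'₀⟩ := hA'.exists_mem_ne_pt hA'ne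
  have class_eq {u : S} (hu : u ∈ A ∪ A') (hu₀ : u ≠ σ.pt) : Quotient.mk _ u = q :=
    (hunion ▸ hu : u ∈ σ.component _).resolve_left hu₀
  have haa' : NConn σ a a' :=
    Quotient.exact ((class_eq (Or.inl ha) ha₀).trans (class_eq (Or.inr ha') ha'₀).symm)
  have hcover (u : S) (hau : NConn σ a u) : u ∈ A ∪ A' :=
    hunion ▸ Or.inr ((Quotient.sound hau.symm).trans (class_eq (Or.inl ha) ha₀))
  have : a' ∈ A ∩ A' := ⟨hA.mem_of_nConn hA' hinter hcover ha haa', ha'⟩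
  exact ha'₀ (hinter ▸ this : a' ∈ ({σ.pt} : Set S))

theorem mk_ne_mk_pt {s : S} (hs : s ≠ σ.pt) :
    (Quotient.mk _ s : Quotient σ.connSetoid) ≠ Quotient.mk _ σ.pt :=
  fun h => hs (Quotient.exact h : NConn σ s σ.pt).eq_pt

theorem isIrreducibleSet_component {q : Quotient σ.connSetoid} (hq : q ≠ Quotient.mk _ σ.pt) :
    IsIrreducibleSet σ (σ.component q) := by
  induction q using Quotient.inductionOn with
  | h s =>
    have hs : s ≠ σ.pt := fun h => hq (h ▸ rfl)
    exact ⟨isNSubset_component _, fun h => hs (h ▸ mem_component_mk s : s ∈ ({σ.pt} : Set S)),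
      not_isReducibleSet_component _⟩

theorem exists_mem_component_of_generates {gens : Set S}
    (hgen : ∀ s : S, ∃ n : X, ∃ g ∈ gens, s = σ.act n g) {s : S} (hs : s ≠ σ.pt) :
    ∃ g ∈ gens, g ≠ σ.pt ∧ s ∈ σ.component (Quotient.mk _ g) := by
  obtain ⟨n, g, hg, rfl⟩ := hgen s
  have hg₀ : g ≠ σ.pt := fun h => hs (h ▸ σ.act_pt n)
  exact ⟨g, hg, hg₀, Or.inr (Quotient.sound (NConn.act_of_ne_pt hg₀ hs))⟩

end NSetOn

/-- A finitely generated `N`-set `S` has a finite partition into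
irreducible `N`-subsets, with at most as many components as generators. -/
theorem stmt5 {X S : Type} (B : BinoidOn X) (sigma : NSetOn B S)
    (gens : Finset S) (hgen : ∀ s : S, ∃ n : X, ∃ g ∈ gens, s = sigma.act n g) :
    ∃ (k : ℕ) (T : Fin k → Set S), k ≤ gens.card ∧
      (∀ i, IsIrreducibleSet sigma (T i)) ∧
      ((⋃ i, T i) ∪ {sigma.pt} = Set.univ) ∧
      (∀ i j, i ≠ j → T i ∩ T j = {sigma.pt}) := by
  classical
  let R := (gens.image (Quotient.mk sigma.connSetoid)).erase (Quotient.mk _ sigma.pt)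
  let e := R.equivFin
  refine ⟨R.card, fun i => sigma.component (e.symm i), ?_, ?_, ?_, ?_⟩
  · exact Finset.card_erase_le.trans Finset.card_image_le
  · exact fun i => NSetOn.isIrreducibleSet_component (Finset.mem_erase.mp (e.symm i).2).1
  · refine Set.eq_univ_of_forall fun s => ?_
    by_cases hs : s = sigma.pt
    · exact Or.inr hs
    obtain ⟨g, hg, hg₀, hsg⟩ := NSetOn.exists_mem_component_of_generates hgen hs
    have hgR : Quotient.mk _ g ∈ R :=
      Finset.mem_erase.mpr ⟨NSetOn.mk_ne_mk_pt hg₀, Finset.mem_image_of_mem _ hg⟩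
    exact Or.inl (Set.mem_iUnion.mpr ⟨e ⟨_, hgR⟩, by simpa using hsg⟩)
  · exact fun i j hij =>
      NSetOn.component_inter_component fun h => hij (e.symm.injective (Subtype.ext h))
end

section
/- Let N be a binoid and (S,p) ≠ {p} an N-set. Then S is irreducible (not a pointed union of nontrivial N-subsets) if and only if S∖{p} consists of a single equivalence class under the connectedness relation ∼_N. -/
/-- An `N`-set `S ≠ {p}` is irreducible (not a pointed union of
nontrivial `N`-subsets) iff `S ∖ {p}` is a single equivalence class for `∼_N`. -/
theorem stmt6 {X S : Type} (B : BinoidOn X) (sigma : NSetOn B S)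
    (hS : ∃ s : S, s ≠ sigma.pt) :
    (¬ IsReducibleSet sigma (Set.univ : Set S)) ↔
      ∀ s t : S, s ≠ sigma.pt → t ≠ sigma.pt → NConn sigma s t := by
  have hstep_symm : ∀ {a b : S}, NStep sigma a b → NStep sigma b a := by
    rintro a b ⟨ha, hb, n, hn, h⟩
    exact ⟨hb, ha, n, hn, h.symm⟩
  have hsymm : ∀ {a b : S}, NConn sigma a b → NConn sigma b a := by
    intro a b h
    induction h with
    | refl => exact Relation.ReflTransGen.refl
    | tail _ h2 ih => exact Relation.ReflTransGen.head (hstep_symm h2) ih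
  constructor
  · intro hirr s t hs ht
    by_contra hcon
    apply hirr
    refine ⟨{u | u = sigma.pt ∨ NConn sigma s u},
      {u | u = sigma.pt ∨ ¬ NConn sigma s u}, ⟨Or.inl rfl, ?_⟩, ⟨Or.inl rfl, ?_⟩,
      ?_, ?_, ?_, ?_⟩
    · rintro n u (rfl | hu)
      · exact Or.inl (sigma.act_pt n)
      · by_cases hp : sigma.act n u = sigma.pt
        · exact Or.inl hp
        · refine Or.inr (hu.tail ⟨?_, hp, n, ?_, Or.inl rfl⟩)
          · rintro rfl
            exact hp (sigma.act_pt n)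
          · rintro rfl
            exact hp (sigma.act_infty u)
    · rintro n u (rfl | hu)
      · exact Or.inl (sigma.act_pt n)
      · by_cases hp : sigma.act n u = sigma.pt
        · exact Or.inl hp
        · refine Or.inr (fun hc => hu (hc.tail ?_))
          refine hstep_symm ⟨?_, hp, n, ?_, Or.inl rfl⟩
          · rintro rfl
            exact hp (sigma.act_pt n)
          · rintro rfl
            exact hp (sigma.act_infty u)
    · intro hA
      have : s ∈ ({sigma.pt} : Set S) := hA ▸ (Or.inr Relation.ReflTransGen.refl)
      exact hs this
    · intro hA
      have : t ∈ ({sigma.pt} : Set S) := hA ▸ (Or.inr hcon)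
      exact ht this
    · ext u
      simp only [Set.mem_union, Set.mem_setOf_eq, Set.mem_univ, iff_true]
      by_cases h : NConn sigma s u
      · exact Or.inl (Or.inr h)
      · exact Or.inr (Or.inr h)
    · ext u
      simp only [Set.mem_inter_iff, Set.mem_setOf_eq, Set.mem_singleton_iff]
      constructor
      · rintro ⟨(h1 | h1), (h2 | h2)⟩ <;> first | exact h1 | exact h2 | exact absurd h1 h2
      · rintro rfl
        exact ⟨Or.inl rfl, Or.inl rfl⟩
  · rintro hconn ⟨A, A', ⟨hptA, hclA⟩, ⟨hptA', hclA'⟩, hAne, hA'ne, hcup, hcap⟩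
    obtain ⟨a, haA, ha⟩ : ∃ a, a ∈ A ∧ a ≠ sigma.pt := by
      by_contra h
      push_neg at h
      apply hAne
      ext u
      exact ⟨fun hu => by_contra fun hne => hne (h u hu), fun hu => hu ▸ hptA⟩
    obtain ⟨b, hbA', hb⟩ : ∃ b, b ∈ A' ∧ b ≠ sigma.pt := by
      by_contra h
      push_neg at h
      apply hA'ne
      ext u
      exact ⟨fun hu => by_contra fun hne => hne (h u hu), fun hu => hu ▸ hptA'⟩
    -- connected elements starting in A \ {pt} stay in A
    have key : ∀ {u v : S}, NConn sigma u v → u ∈ A → v ∈ A := by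
      intro u v h
      induction h with
      | refl => exact id
      | tail _ h2 ih =>
        intro hu
        rename_i c d _
        obtain ⟨hc, hd, n, hn, hor⟩ := h2
        have hcA := ih hu
        rcases hor with h | h
        · exact h ▸ hclA n c hcA
        · -- d acts to c; d ∈ A ∪ A' = univ
          have : d ∈ A ∪ A' := by rw [hcup]; trivial
          rcases this with hdA | hdA'
          · exact hdA
          · exfalso
            have : c ∈ A ∩ A' := ⟨hcA, h ▸ hclA' n d hdA'⟩
            rw [hcap] at this
            exact hc this
    have : b ∈ A ∩ A' := ⟨key (hconn a b ha hb) haA, hbA'⟩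
    rw [hcap] at this
    exact hb this
end

section
/- Let M and N be commutative binoids with ideals I ⊆ M and J ⊆ N. Then (I ∧ N) ∪ (M ∧ J) is an ideal of the smash product M ∧ N, and (M ∧ N)/((I ∧ N) ∪ (M ∧ J)) is isomorphic to (M/I) ∧ (N/J). -/
section Stmt8Aux

variable {X : Type u} {Y : Type v}

lemma aux_mem_genIdeal (B : BinoidOn X) {I : Set X} {a : X} (h : a ∈ I) :
    a ∈ B.genIdeal I := ⟨a, h, B.zero, by rw [B.add_comm, B.zero_add]⟩

lemma aux_infty_mem (B : BinoidOn X) {I : Set X} (hI : B.IsIdeal I) :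
    B.infty ∈ I := by
  obtain ⟨a, ha⟩ := hI.1
  have h := hI.2 a ha B.infty
  rwa [B.add_comm, B.infty_add] at h

lemma aux_genIdeal_sub (B : BinoidOn X) {I : Set X} (hI : B.IsIdeal I)
    {a : X} (h : a ∈ B.genIdeal I) : a ∈ I := by
  obtain ⟨b, hb, n, rfl⟩ := h
  exact hI.2 b hb n

/-- The map `m ∧ n ↦ [m] ∧ [n]` on representatives. -/
def smashQuotMap (B : BinoidOn X) (C : BinoidOn Y) (I : Set X) (J : Set Y) :
    X × Y → BinoidOn.SmashCarrier (B.quotB I) (C.quotB J) :=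
  fun p => Quotient.mk (collapseSetoid ((B.quotB I).inftyPairs (C.quotB J)))
    (Quotient.mk (collapseSetoid (B.genIdeal I)) p.1,
     Quotient.mk (collapseSetoid (C.genIdeal J)) p.2)

lemma smashQuotMap_inftyPairs (B : BinoidOn X) (C : BinoidOn Y) (I : Set X) (J : Set Y)
    {p : X × Y} (hp : p ∈ B.inftyPairs C) :
    ((Quotient.mk (collapseSetoid (B.genIdeal I)) p.1),
     (Quotient.mk (collapseSetoid (C.genIdeal J)) p.2)) ∈
      (B.quotB I).inftyPairs (C.quotB J) := by
  rcases hp with h | h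
  · exact Or.inl (congrArg _ h)
  · exact Or.inr (congrArg _ h)

lemma smashQuotMap_ideal (B : BinoidOn X) (C : BinoidOn Y) {I : Set X} {J : Set Y}
    (hI : B.IsIdeal I) (hJ : C.IsIdeal J) {p : X × Y} (hp : p.1 ∈ I ∨ p.2 ∈ J) :
    ((Quotient.mk (collapseSetoid (B.genIdeal I)) p.1),
     (Quotient.mk (collapseSetoid (C.genIdeal J)) p.2)) ∈
      (B.quotB I).inftyPairs (C.quotB J) := by
  rcases hp with h | h
  · exact Or.inl (Quotient.sound (Or.inr
      ⟨aux_mem_genIdeal B h, aux_mem_genIdeal B (aux_infty_mem B hI)⟩))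
  · exact Or.inr (Quotient.sound (Or.inr
      ⟨aux_mem_genIdeal C h, aux_mem_genIdeal C (aux_infty_mem C hJ)⟩))

end Stmt8Aux

/-- For commutative binoids `M, N` with ideals `I ⊆ M`, `J ⊆ N`,
the set `(I ∧ N) ∪ (M ∧ J)` is an ideal of the smash product `M ∧ N`, and
`(M ∧ N)/((I ∧ N) ∪ (M ∧ J)) ≅ (M/I) ∧ (N/J)` (via `[m ∧ n] ↦ [m] ∧ [n]`). -/
theorem stmt8 {X Y : Type} (B : BinoidOn X) (C : BinoidOn Y)
    (I : Set X) (J : Set Y) (hI : B.IsIdeal I) (hJ : C.IsIdeal J) :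
    (B.smash C).IsIdeal
        {x : B.SmashCarrier C | ∃ p : X × Y,
          x = Quotient.mk _ p ∧ (p.1 ∈ I ∨ p.2 ∈ J)} ∧
      ∃ e : (B.smash C).ReesQuot
            {x : B.SmashCarrier C | ∃ p : X × Y,
              x = Quotient.mk _ p ∧ (p.1 ∈ I ∨ p.2 ∈ J)} ≃
          BinoidOn.SmashCarrier (B.quotB I) (C.quotB J),
        ∀ p : X × Y,
          e (Quotient.mk _ (Quotient.mk _ p)) =
            Quotient.mk _ ((Quotient.mk _ p.1 : B.ReesQuot I),
              (Quotient.mk _ p.2 : C.ReesQuot J)) := by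
  have hIinf : B.infty ∈ I := aux_infty_mem B hI
  have hKideal : (B.smash C).IsIdeal
      {x : B.SmashCarrier C | ∃ p : X × Y,
        x = Quotient.mk _ p ∧ (p.1 ∈ I ∨ p.2 ∈ J)} := by
    constructor
    · exact ⟨Quotient.mk _ (B.infty, C.infty), ⟨(B.infty, C.infty), rfl, Or.inl hIinf⟩⟩
    · rintro a ⟨p, rfl, hp⟩ x
      induction x using Quotient.ind with
      | _ q =>
        refine ⟨(B.add p.1 q.1, C.add p.2 q.2), rfl, ?_⟩
        rcases hp with h | h
        · exact Or.inl (hI.2 _ h _)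
        · exact Or.inr (hJ.2 _ h _)
  have hmemK : ∀ r : X × Y, (r.1 ∈ I ∨ r.2 ∈ J) →
      Quotient.mk (collapseSetoid (B.inftyPairs C)) r ∈
        (B.smash C).genIdeal {x : B.SmashCarrier C | ∃ p : X × Y,
          x = Quotient.mk _ p ∧ (p.1 ∈ I ∨ p.2 ∈ J)} :=
    fun r hr => aux_mem_genIdeal _ ⟨r, rfl, hr⟩
  have hresp1 : ∀ p q : X × Y, (collapseSetoid (B.inftyPairs C)).r p q →
      smashQuotMap B C I J p = smashQuotMap B C I J q := by
    rintro p q (rfl | ⟨hp, hq⟩)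
    · rfl
    · exact Quotient.sound (Or.inr ⟨smashQuotMap_inftyPairs B C I J hp,
        smashQuotMap_inftyPairs B C I J hq⟩)
  have hresp2 : ∀ x y : B.SmashCarrier C,
      (collapseSetoid ((B.smash C).genIdeal
        {x : B.SmashCarrier C | ∃ p : X × Y,
          x = Quotient.mk _ p ∧ (p.1 ∈ I ∨ p.2 ∈ J)})).r x y →
      Quotient.lift (smashQuotMap B C I J) hresp1 x =
        Quotient.lift (smashQuotMap B C I J) hresp1 y := by
    rintro x y (rfl | ⟨hx, hy⟩)
    · rfl
    · obtain ⟨p, rfl, hp⟩ := aux_genIdeal_sub _ hKideal hx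
      obtain ⟨q, rfl, hq⟩ := aux_genIdeal_sub _ hKideal hy
      exact Quotient.sound (Or.inr ⟨smashQuotMap_ideal B C hI hJ hp,
        smashQuotMap_ideal B C hI hJ hq⟩)
  refine ⟨hKideal, ⟨Equiv.ofBijective
    (Quotient.lift (Quotient.lift (smashQuotMap B C I J) hresp1) hresp2)
    ⟨?_, ?_⟩, fun p => rfl⟩⟩
  · -- injective
    rintro ⟨⟨p1, p2⟩⟩ ⟨⟨q1, q2⟩⟩ h
    have h2 : smashQuotMap B C I J (p1, p2) = smashQuotMap B C I J (q1, q2) := h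
    have memI : ∀ a : X, Quotient.mk (collapseSetoid (B.genIdeal I)) a =
        Quotient.mk (collapseSetoid (B.genIdeal I)) B.infty → a ∈ I := by
      intro a ha
      rcases Quotient.exact ha with rfl | ⟨h1, _⟩
      · exact hIinf
      · exact aux_genIdeal_sub B hI h1
    have memJ : ∀ b : Y, Quotient.mk (collapseSetoid (C.genIdeal J)) b =
        Quotient.mk (collapseSetoid (C.genIdeal J)) C.infty → b ∈ J := by
      intro b hb
      rcases Quotient.exact hb with rfl | ⟨h1, _⟩
      · exact aux_infty_mem C hJ
      · exact aux_genIdeal_sub C hJ h1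
    rcases Quotient.exact h2 with heq | ⟨hp, hq⟩
    · have e1 := Quotient.exact (congrArg Prod.fst heq)
      have e2 := Quotient.exact (congrArg Prod.snd heq)
      rcases e1 with rfl | ⟨h1, h1'⟩
      · rcases e2 with rfl | ⟨h2', h2''⟩
        · rfl
        · exact Quotient.sound (Or.inr
            ⟨hmemK _ (Or.inr (aux_genIdeal_sub C hJ h2')),
             hmemK _ (Or.inr (aux_genIdeal_sub C hJ h2''))⟩)
      · exact Quotient.sound (Or.inr
          ⟨hmemK _ (Or.inl (aux_genIdeal_sub B hI h1)),
           hmemK _ (Or.inl (aux_genIdeal_sub B hI h1'))⟩)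
    · have hp' : p1 ∈ I ∨ p2 ∈ J := by
        rcases hp with h' | h'
        · exact Or.inl (memI _ h')
        · exact Or.inr (memJ _ h')
      have hq' : q1 ∈ I ∨ q2 ∈ J := by
        rcases hq with h' | h'
        · exact Or.inl (memI _ h')
        · exact Or.inr (memJ _ h')
      exact Quotient.sound (Or.inr ⟨hmemK _ hp', hmemK _ hq'⟩)
  · -- surjective
    rintro ⟨⟨a, b⟩⟩
    induction a using Quotient.ind with
    | _ m =>
      induction b using Quotient.ind with
      | _ n =>
        exact ⟨Quotient.mk _ (Quotient.mk _ (m, n)), rfl⟩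
end

section
/- Let N be a binoid and ∞ → S₁ → S₂ → ⋯ → Sₙ → ∞ a strongly exact sequence of finite N-sets. Then the alternating sum Σᵢ (−1)ⁱ #Sᵢ = 0, where #S = |S| − 1 counts elements other than the distinguished point. -/
/-- Counting lemma: if `f : A → B` has range `{y | q y}`, is injective away from
the fiber over `pB`, and `q pB` holds, then `#A = #ker f + #{q}`. -/
lemma stmt9_key {A B : Type} [Finite A] [Finite B] (f : A → B) (pB : B) (q : B → Prop)
    (hr : Set.range f = {y | q y})
    (hinj : ∀ x y, f x ≠ pB → f x = f y → x = y)
    (hq : q pB) :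
    (Nat.card A : ℤ) - 1 =
      ((Nat.card {x : A // f x = pB} : ℤ) - 1) + ((Nat.card {y : B // q y} : ℤ) - 1) := by
  classical
  have e1 : Nat.card A = Nat.card {x // f x = pB} + Nat.card {x : A // ¬ f x = pB} := by
    rw [← Nat.card_sum]
    exact Nat.card_congr (Equiv.sumCompl (fun x : A => f x = pB)).symm
  have e2 : {x : A // ¬ f x = pB} ≃ {y : B // q y ∧ ¬ y = pB} := by
    refine Equiv.ofBijective (fun x => ⟨f x.1, ?_, x.2⟩) ⟨?_, ?_⟩
    · have : f x.1 ∈ Set.range f := ⟨x.1, rfl⟩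
      rw [hr] at this; exact this
    · rintro ⟨x, hx⟩ ⟨y, hy⟩ h
      exact Subtype.ext (hinj x y hx (by simpa using congrArg Subtype.val h))
    · rintro ⟨y, hy, hy'⟩
      have : y ∈ Set.range f := by rw [hr]; exact hy
      obtain ⟨x, rfl⟩ := this
      exact ⟨⟨x, hy'⟩, rfl⟩
  have e3 : Nat.card {y : B // q y} =
      Nat.card {y : B // q y ∧ y = pB} + Nat.card {y : B // q y ∧ ¬ y = pB} := by
    rw [← Nat.card_sum]
    refine Nat.card_congr (((Equiv.sumCompl
      (fun y' : {y : B // q y} => y'.1 = pB)).symm.trans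
      (Equiv.sumCongr (Equiv.subtypeSubtypeEquivSubtypeInter q (fun y => y = pB))
        (Equiv.subtypeSubtypeEquivSubtypeInter q (fun y => ¬ y = pB)))))
  have e4 : Nat.card {y : B // q y ∧ y = pB} = 1 :=
    Nat.card_eq_one_iff_unique.mpr
      ⟨⟨fun a b => Subtype.ext (a.2.2.trans b.2.2.symm)⟩, ⟨⟨pB, hq, rfl⟩⟩⟩
  have e5 : Nat.card {x : A // ¬ f x = pB} = Nat.card {y : B // q y ∧ ¬ y = pB} :=
    Nat.card_congr e2
  rw [e1, e3, e4, e5]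
  push_cast
  ring

/-- For a strongly exact sequence `∞ → S₁ → ⋯ → Sₙ → ∞` of finite
`N`-sets, the alternating sum `∑ᵢ (-1)ⁱ #Sᵢ` vanishes, where `#S = |S| - 1`. -/
theorem stmt9 {X : Type} (B : BinoidOn X) (n : ℕ)
    (S : ℕ → Type) (sigma : ∀ i, NSetOn B (S i)) (hfin : ∀ i, Finite (S i))
    (phi : ∀ i, S i → S (i + 1))
    (hhom : ∀ i (a : X) (s : S i),
      phi i ((sigma i).act a s) = (sigma (i + 1)).act a (phi i s))
    (h0 : ∀ x : S 0, x = (sigma 0).pt)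
    (hlast : ∀ x : S (n + 1), x = (sigma (n + 1)).pt)
    (hexact : ∀ i < n,
      Set.range (phi i) = {x : S (i + 1) | phi (i + 1) x = (sigma (i + 2)).pt})
    (hstrong : ∀ i ≤ n, ∀ x y : S i,
      phi i x ≠ (sigma (i + 1)).pt → phi i x = phi i y → x = y) :
    ∑ i ∈ Finset.range n, (-1 : ℤ) ^ (i + 1) * ((Nat.card (S (i + 1)) : ℤ) - 1)
      = 0 := by
  rcases Nat.eq_zero_or_pos n with rfl | hn
  · simp
  have hpt : ∀ i, phi i ((sigma i).pt) = (sigma (i + 1)).pt := by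
    intro i
    have h1 : (sigma i).pt = (sigma i).act B.infty (sigma i).pt :=
      ((sigma i).act_infty _).symm
    rw [h1, hhom, (sigma (i + 1)).act_infty]
  set k : ℕ → ℤ :=
    fun j => (Nat.card {y : S j // phi j y = (sigma (j + 1)).pt} : ℤ) - 1 with hk
  have hS : ∀ j, 1 ≤ j → j ≤ n →
      (Nat.card (S j) : ℤ) - 1 = k j + k (j + 1) := by
    intro j h1 h2
    have := hfin j; have := hfin (j + 1)
    refine stmt9_key (phi j) ((sigma (j + 1)).pt)
      (fun y => phi (j + 1) y = (sigma (j + 2)).pt) ?_ (hstrong j h2) (hpt (j + 1))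
    rcases lt_or_eq_of_le h2 with h | rfl
    · exact hexact j h
    · ext y
      simp only [Set.mem_range, Set.mem_setOf_eq]
      constructor
      · intro _
        rw [hlast y, hpt]
      · intro _
        exact ⟨(sigma j).pt, by rw [hpt, ← hlast y]⟩
  have k1 : k 1 = 0 := by
    have hone : Nat.card {y : S 1 // phi 1 y = (sigma 2).pt} = 1 := by
      refine Nat.card_eq_one_iff_unique.mpr ⟨⟨fun a b => Subtype.ext ?_⟩,
        ⟨⟨(sigma 1).pt, hpt 1⟩⟩⟩
      have hra : a.1 ∈ Set.range (phi 0) := by rw [hexact 0 hn]; exact a.2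
      have hrb : b.1 ∈ Set.range (phi 0) := by rw [hexact 0 hn]; exact b.2
      obtain ⟨x, hx⟩ := hra
      obtain ⟨y, hy⟩ := hrb
      rw [← hx, ← hy, h0 x, h0 y]
    simp [hk, hone]
  have knp1 : k (n + 1) = 0 := by
    have hone : Nat.card {y : S (n + 1) // phi (n + 1) y = (sigma (n + 2)).pt} = 1 := by
      refine Nat.card_eq_one_iff_unique.mpr ⟨⟨fun a b => Subtype.ext ?_⟩,
        ⟨⟨(sigma (n + 1)).pt, hpt (n + 1)⟩⟩⟩
      rw [hlast a.1, hlast b.1]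
    simp [hk, hone]
  calc ∑ i ∈ Finset.range n, (-1 : ℤ) ^ (i + 1) * ((Nat.card (S (i + 1)) : ℤ) - 1)
      = ∑ i ∈ Finset.range n,
          ((fun i => (-1 : ℤ) ^ (i + 1) * k (i + 1)) i
            - (fun i => (-1 : ℤ) ^ (i + 1) * k (i + 1)) (i + 1)) := by
        refine Finset.sum_congr rfl fun i hi => ?_
        have hi' : i < n := Finset.mem_range.mp hi
        rw [hS (i + 1) (by omega) (by omega)]
        ring
    _ = (-1 : ℤ) ^ (0 + 1) * k (0 + 1) - (-1 : ℤ) ^ (n + 1) * k (n + 1) :=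
        Finset.sum_range_sub' _ n
    _ = 0 := by rw [k1, knp1]; ring
end

section
/- Let N₁,…,Nₖ be nonzero binoids. Then the unit group of the smash product ⋀ᵢ Nᵢ equals the product of the unit groups: (⋀ᵢ Nᵢ)^× = ∏ᵢ Nᵢ^×. -/
/-- Tuples with some coordinate equal to `∞`. -/
def famInfty {k : ℕ} {N : Fin k → Type} (B : ∀ i, BinoidOn (N i)) :
    Set (∀ i, N i) := {f | ∃ i, f i = (B i).infty}

/-- Carrier of the smash product `⋀ᵢ Nᵢ` of a finite family of binoids. -/
abbrev FamSmashCarrier {k : ℕ} {N : Fin k → Type} (B : ∀ i, BinoidOn (N i)) :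
    Type := Quotient (collapseSetoid (famInfty B))

lemma famInfty_add_left {k : ℕ} {N : Fin k → Type} (B : ∀ i, BinoidOn (N i))
    {f g : ∀ i, N i} (hf : f ∈ famInfty B) :
    (fun i => (B i).add (f i) (g i)) ∈ famInfty B := by
  obtain ⟨i, hi⟩ := hf
  exact ⟨i, by simp only [hi, (B i).infty_add]⟩

lemma famInfty_add_right {k : ℕ} {N : Fin k → Type} (B : ∀ i, BinoidOn (N i))
    {f g : ∀ i, N i} (hg : g ∈ famInfty B) :
    (fun i => (B i).add (f i) (g i)) ∈ famInfty B := by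
  obtain ⟨i, hi⟩ := hg
  exact ⟨i, by simp only [hi, (B i).add_comm, (B i).infty_add]⟩

/-- The smash product binoid `⋀ᵢ Nᵢ`. -/
def famSmash {k : ℕ} {N : Fin k → Type} (B : ∀ i, BinoidOn (N i)) :
    BinoidOn (FamSmashCarrier B) where
  add := Quotient.map₂ (fun f g i => (B i).add (f i) (g i)) (by
    rintro f f' (rfl | ⟨hf, hf'⟩) g g' (rfl | ⟨hg, hg'⟩)
    · exact Or.inl rfl
    · exact Or.inr ⟨famInfty_add_right B hg, famInfty_add_right B hg'⟩
    · exact Or.inr ⟨famInfty_add_left B hf, famInfty_add_left B hf'⟩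
    · exact Or.inr ⟨famInfty_add_left B hf, famInfty_add_left B hf'⟩)
  zero := Quotient.mk _ (fun i => (B i).zero)
  infty := Quotient.mk _ (fun i => (B i).infty)
  add_assoc := by
    rintro ⟨f⟩ ⟨g⟩ ⟨h⟩
    exact congrArg (Quotient.mk _) (funext fun i => (B i).add_assoc _ _ _)
  add_comm := by
    rintro ⟨f⟩ ⟨g⟩
    exact congrArg (Quotient.mk _) (funext fun i => (B i).add_comm _ _)
  zero_add := by
    rintro ⟨f⟩
    exact congrArg (Quotient.mk _) (funext fun i => (B i).zero_add _)
  infty_add := by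
    rintro ⟨f⟩
    exact congrArg (Quotient.mk _) (funext fun i => (B i).infty_add _)

/-- For nonzero binoids `N₁, …, Nₖ`, the unit group of the smash
product `⋀ᵢ Nᵢ` is `∏ᵢ Nᵢ^×`: the units are exactly the classes of tuples of
units. -/
theorem stmt12 {k : ℕ} {N : Fin k → Type} (B : ∀ i, BinoidOn (N i))
    (hnz : ∀ i, (B i).zero ≠ (B i).infty) :
    ∀ x : FamSmashCarrier B,
      x ∈ (famSmash B).unitsSet ↔
        ∃ f : ∀ i, N i, (∀ i, f i ∈ (B i).unitsSet) ∧ x = Quotient.mk _ f := by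
  have hz : (fun i => (B i).zero) ∉ famInfty B := by
    rintro ⟨i, hi⟩; exact hnz i hi
  rintro ⟨f⟩
  constructor
  · rintro ⟨a, ha⟩
    induction a using Quotient.ind with
    | _ g =>
      have ha' : Quotient.mk (collapseSetoid (famInfty B))
          (fun i => (B i).add (f i) (g i)) =
          Quotient.mk _ (fun i => (B i).zero) := ha
      have := Quotient.exact ha'
      rcases this with h | ⟨_, h2⟩
      · refine ⟨f, fun i => ⟨g i, ?_⟩, rfl⟩
        exact congrFun h i
      · exact absurd h2 hz
  · rintro ⟨g, hg, hx⟩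
    choose a ha using hg
    refine ⟨Quotient.mk _ a, ?_⟩
    have : Quotient.mk (collapseSetoid (famInfty B)) f = Quotient.mk _ g := hx
    show (famSmash B).add (Quotient.mk _ f) (Quotient.mk _ a) = _
    rw [this]
    exact congrArg (Quotient.mk _) (funext fun i => ha i)
end

section
/- Let N and M be finitely generated, semipositive, commutative binoids. Then the Hilbert-Kunz function of the smash product is the product of the Hilbert-Kunz functions: HKF(M ∧ N, q) = HKF(M,q) · HKF(N,q) for every positive integer q. -/
section AuxHK

open BinoidOn

private lemma card_option_sub_one (α : Type) : Nat.card (Option α) - 1 = Nat.card α := by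
  by_cases h : Finite α
  · have : Nat.card (Option α) = Nat.card α + 1 := by
      have := Nat.card_congr ((Equiv.optionEquivSumPUnit α : Option α ≃ α ⊕ PUnit.{1}))
      rw [this, Nat.card_sum, Nat.card_eq_fintype_card (α := PUnit)]
      simp
    omega
  · rw [not_finite_iff_infinite] at h
    haveI : Infinite (Option α) := by infer_instance
    rw [Nat.card_eq_zero_of_infinite, Nat.card_eq_zero_of_infinite]

private lemma collapse_card {Z : Type} (A : Set Z) (hA : A.Nonempty) :
    Nat.card (Quotient (collapseSetoid A)) = Nat.card (Option ↥(Aᶜ)) := by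
  classical
  obtain ⟨a0, ha0⟩ := hA
  refine (Nat.card_congr (Equiv.ofBijective
    (fun o : Option ↥(Aᶜ) => o.elim (Quotient.mk _ a0) (fun s => Quotient.mk _ s.1)) ?_)).symm
  constructor
  · rintro (_|⟨x,hx⟩) (_|⟨y,hy⟩) h
    · rfl
    · exfalso
      rcases Quotient.exact h with h' | ⟨_, h2⟩
      · exact hy (show ((⟨y, hy⟩ : ↥(Aᶜ)) : Z) ∈ A from h' ▸ ha0)
      · exact hy h2
    · exfalso
      rcases Quotient.exact h with h' | ⟨h1, _⟩
      · exact hx (show ((⟨x, hx⟩ : ↥(Aᶜ)) : Z) ∈ A from h'.symm ▸ ha0)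
      · exact hx h1
    · rcases Quotient.exact h with h' | ⟨h1, _⟩
      · exact congrArg some (Subtype.ext h')
      · exact absurd h1 hx
  · rintro ⟨z⟩
    by_cases hz : z ∈ A
    · exact ⟨none, Quotient.sound (Or.inr ⟨ha0, hz⟩)⟩
    · exact ⟨some ⟨z, hz⟩, rfl⟩

variable {X Y : Type} (B : BinoidOn X) (C : BinoidOn Y)

private lemma smul_infty' {q : ℕ} (hq : 0 < q) : B.smul q B.infty = B.infty := by
  cases q with
  | zero => omega
  | succ n => exact B.infty_add _

private lemma smul_zero' (n : ℕ) : B.smul n B.zero = B.zero := by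
  induction n with
  | zero => rfl
  | succ n ih => show B.add B.zero _ = _; rw [B.zero_add, ih]

private lemma infty_nplus (hsp : B.Semipositive) : B.infty ∈ B.nplus := by
  rintro ⟨a, ha⟩
  rw [B.infty_add] at ha
  exact hsp.1 ha.symm

private lemma infty_mem_frob (hsp : B.Semipositive) {q : ℕ} (hq : 0 < q) :
    B.infty ∈ B.frob q B.nplus :=
  ⟨B.smul q B.infty, ⟨B.infty, infty_nplus B hsp, rfl⟩, B.infty,
    by rw [smul_infty' B hq, B.infty_add]⟩

private lemma smash_add_mk (p r : X × Y) :
    (B.smash C).add (Quotient.mk _ p) (Quotient.mk _ r) =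
      Quotient.mk _ (B.add p.1 r.1, C.add p.2 r.2) := rfl

private lemma smash_smul_mk (n : ℕ) (p : X × Y) :
    (B.smash C).smul n (Quotient.mk _ p) =
      Quotient.mk _ (B.smul n p.1, C.smul n p.2) := by
  induction n with
  | zero => rfl
  | succ n ih =>
    show (B.smash C).add (Quotient.mk _ p) ((B.smash C).smul n (Quotient.mk _ p)) = _
    rw [ih]
    rfl

private lemma smash_units_mk (hBsp : B.Semipositive) (hCsp : C.Semipositive) (p : X × Y) :
    Quotient.mk _ p ∈ (B.smash C).unitsSet ↔
      p.1 ∈ B.unitsSet ∧ p.2 ∈ C.unitsSet := by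
  constructor
  · rintro ⟨u, hu⟩
    induction u using Quotient.ind with
    | _ u =>
      rw [smash_add_mk] at hu
      rcases Quotient.exact hu with h | ⟨_, h2⟩
      · exact ⟨⟨u.1, congrArg Prod.fst h⟩, ⟨u.2, congrArg Prod.snd h⟩⟩
      · rcases h2 with h2 | h2
        · exact absurd h2 hBsp.1
        · exact absurd h2 hCsp.1
  · rintro ⟨⟨u1, h1⟩, ⟨u2, h2⟩⟩
    exact ⟨Quotient.mk _ (u1, u2), congrArg (Quotient.mk _) (Prod.ext h1 h2)⟩

private lemma smash_nplus_mk (hBsp : B.Semipositive) (hCsp : C.Semipositive) (p : X × Y) :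
    Quotient.mk _ p ∈ (B.smash C).nplus ↔
      p.1 ∈ B.nplus ∨ p.2 ∈ C.nplus := by
  unfold BinoidOn.nplus
  rw [Set.mem_compl_iff, smash_units_mk B C hBsp hCsp, not_and_or]
  rfl

private lemma mem_frob_smash (hBsp : B.Semipositive) (hCsp : C.Semipositive)
    {q : ℕ} (hq : 0 < q) (x : X) (y : Y) :
    Quotient.mk _ (x, y) ∈ (B.smash C).frob q (B.smash C).nplus ↔
      x ∈ B.frob q B.nplus ∨ y ∈ C.frob q C.nplus := by
  constructor
  · rintro ⟨z, ⟨a, ha, rfl⟩, n, heq⟩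
    induction a using Quotient.ind with
    | _ a =>
    induction n using Quotient.ind with
    | _ n =>
      rw [smash_smul_mk, smash_add_mk] at heq
      rcases Quotient.exact heq with h | ⟨h1, _⟩
      · rcases (smash_nplus_mk B C hBsp hCsp a).mp ha with ha1 | ha2
        · exact Or.inl ⟨B.smul q a.1, ⟨a.1, ha1, rfl⟩, n.1, congrArg Prod.fst h⟩
        · exact Or.inr ⟨C.smul q a.2, ⟨a.2, ha2, rfl⟩, n.2, congrArg Prod.snd h⟩
      · rcases h1 with h1 | h1
        · exact Or.inl (by rw [show x = B.infty from h1]; exact infty_mem_frob B hBsp hq)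
        · exact Or.inr (by rw [show y = C.infty from h1]; exact infty_mem_frob C hCsp hq)
  · rintro (⟨z, ⟨a, ha, rfl⟩, n, hx⟩ | ⟨z, ⟨a, ha, rfl⟩, n, hy⟩)
    · refine ⟨(B.smash C).smul q (Quotient.mk _ (a, C.zero)),
        ⟨Quotient.mk _ (a, C.zero),
          (smash_nplus_mk B C hBsp hCsp _).mpr (Or.inl ha), rfl⟩,
        Quotient.mk _ (n, y), ?_⟩
      rw [smash_smul_mk, smash_add_mk]
      exact congrArg (Quotient.mk _)
        (Prod.ext (by simpa using hx) (by rw [smul_zero' C, C.zero_add]))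
    · refine ⟨(B.smash C).smul q (Quotient.mk _ (B.zero, a)),
        ⟨Quotient.mk _ (B.zero, a),
          (smash_nplus_mk B C hBsp hCsp _).mpr (Or.inr ha), rfl⟩,
        Quotient.mk _ (x, n), ?_⟩
      rw [smash_smul_mk, smash_add_mk]
      exact congrArg (Quotient.mk _)
        (Prod.ext (by rw [smul_zero' B, B.zero_add]) (by simpa using hy))

end AuxHK

/-- For finitely generated semipositive commutative binoids `M, N`,
`HKF(M ∧ N, q) = HKF(M, q) · HKF(N, q)` for every positive integer `q`. -/
theorem stmt13 {X Y : Type} (B : BinoidOn X) (C : BinoidOn Y)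
    (hBfg : B.FG) (hCfg : C.FG) (hBsp : B.Semipositive) (hCsp : C.Semipositive) :
    ∀ q : ℕ, 0 < q → (B.smash C).hkf q = B.hkf q * C.hkf q := by
  intro q hq
  classical
  have key : ∀ (x : X) (y : Y),
      Quotient.mk _ (x, y) ∈ (B.smash C).frob q (B.smash C).nplus ↔
        x ∈ B.frob q B.nplus ∨ y ∈ C.frob q C.nplus :=
    fun x y => mem_frob_smash B C hBsp hCsp hq x y
  have hFne : ((B.smash C).frob q (B.smash C).nplus).Nonempty :=
    ⟨Quotient.mk _ (B.infty, C.infty),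
      (key B.infty C.infty).mpr (Or.inl (infty_mem_frob B hBsp hq))⟩
  have ebij : Function.Bijective
      (fun p : ↥((B.frob q B.nplus)ᶜ) × ↥((C.frob q C.nplus)ᶜ) =>
        (⟨Quotient.mk _ (p.1.1, p.2.1),
          fun hm => ((key p.1.1 p.2.1).mp hm).elim p.1.2 p.2.2⟩ :
            ↥(((B.smash C).frob q (B.smash C).nplus)ᶜ))) := by
    constructor
    · rintro ⟨⟨x, hx⟩, ⟨y, hy⟩⟩ ⟨⟨x', hx'⟩, ⟨y', hy'⟩⟩ h
      have h2 := congrArg Subtype.val h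
      rcases Quotient.exact h2 with h3 | ⟨h3, _⟩
      · exact Prod.ext (Subtype.ext (congrArg Prod.fst h3))
          (Subtype.ext (congrArg Prod.snd h3))
      · exfalso
        rcases h3 with h3 | h3
        · exact hx (by rw [show x = B.infty from h3]; exact infty_mem_frob B hBsp hq)
        · exact hy (by rw [show y = C.infty from h3]; exact infty_mem_frob C hCsp hq)
    · rintro ⟨s, hs⟩
      induction s using Quotient.ind with
      | _ p =>
        have hx : p.1 ∉ B.frob q B.nplus := fun h => hs ((key p.1 p.2).mpr (Or.inl h))
        have hy : p.2 ∉ C.frob q C.nplus := fun h => hs ((key p.1 p.2).mpr (Or.inr h))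
        exact ⟨(⟨p.1, hx⟩, ⟨p.2, hy⟩), Subtype.ext rfl⟩
  have hScard : (B.smash C).hkf q =
      Nat.card ↥(((B.smash C).frob q (B.smash C).nplus)ᶜ) := by
    unfold BinoidOn.hkf BinoidOn.hkQuot
    rw [collapse_card _ hFne, card_option_sub_one]
  have hBcard : B.hkf q = Nat.card ↥((B.frob q B.nplus)ᶜ) := by
    unfold BinoidOn.hkf BinoidOn.hkQuot
    rw [collapse_card _ ⟨B.infty, infty_mem_frob B hBsp hq⟩, card_option_sub_one]
  have hCcard : C.hkf q = Nat.card ↥((C.frob q C.nplus)ᶜ) := by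
    unfold BinoidOn.hkf BinoidOn.hkQuot
    rw [collapse_card _ ⟨C.infty, infty_mem_frob C hCsp hq⟩, card_option_sub_one]
  rw [hScard, hBcard, hCcard, ← Nat.card_prod]
  exact Nat.card_congr (Equiv.ofBijective _ ebij).symm
end
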